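/- (Main Theorem) For every natural number c there exists a constant C = C(c), independent of n, such that for all n and all c-quasihomomorphisms f: Z -> Q^n (Q the rationals), w_H(f(x) - x*f(1)) <= C for all x in Z. Moreover one can take C = 28*c. -/

import Mathlib

/-!
Work one coordinate `g` of `f` at a time and self-correct it as in the Blum–Luby–Rubinfeld
linearity test. Fix `X > |x|` and the window `I = [1000X, 2000X)`. If `g` is additive on all but
a sixteenth of the pairs from the slightly wider window `J`, then for each `|t| ≤ X` the
differences `g (y + t) - g y`, `y ∈ I`, agree with one popular value `m t` for all but a seventh
of the `y`. Popular values are additive on `[-X, X]`, so `m x = x • m 1`, and `m t = g t` as soon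
as `g (y + t) = g y + g t` for half of the `y ∈ I`. Since each pair has at most `c` defective
coordinates, double counting shows that at most `16c + 2c + 2c` coordinates violate one of these
three density conditions, and every other coordinate of `f x - x • f 1` vanishes.
-/

/-- Hamming weight: number of nonzero coordinates. -/
noncomputable def wH {Q : Type*} [Zero Q] {n : ℕ} (v : Fin n → Q) : ℕ :=
  Nat.card {i : Fin n // v i ≠ 0}

open Finset

theorem exists_mul_card_filter_ne_le {α β : Type*} [DecidableEq β] [Nonempty β]
    (s : Finset α) (φ : α → β) :
    ∃ v, #s * #{y ∈ s | φ y ≠ v} ≤ #{p ∈ s ×ˢ s | φ p.1 ≠ φ p.2} := by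
  rcases s.eq_empty_or_nonempty with rfl | hs
  · exact ⟨Classical.arbitrary β, by simp⟩
  have hsum : ∑ z ∈ s, #{y ∈ s | φ y ≠ φ z} = #{p ∈ s ×ˢ s | φ p.1 ≠ φ p.2} := by
    simp only [card_filter, sum_product_right]
  obtain ⟨z, -, hz⟩ := exists_le_of_sum_le hs
    (f := fun z => #s * #{y ∈ s | φ y ≠ φ z}) (g := fun _ => #{p ∈ s ×ˢ s | φ p.1 ≠ φ p.2})
    (by rw [← mul_sum, hsum, sum_const, smul_eq_mul])
  exact ⟨φ z, hz⟩

theorem card_filter_lt_mul_card_filter_le {ι α : Type*} [Fintype ι] (S : Finset α)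
    (P : ι → α → Prop) [∀ i a, Decidable (P i a)] {c : ℕ} (hc : ∀ a ∈ S, #{i | P i a} ≤ c)
    (k : ℕ) : #{i | #S < k * #{a ∈ S | P i a}} ≤ k * c := by
  set B : Finset ι := {i | #S < k * #{a ∈ S | P i a}}
  rcases B.eq_empty_or_nonempty with hB | hB
  · simp [hB]
  have hdouble : ∑ i, #{a ∈ S | P i a} = ∑ a ∈ S, #{i | P i a} := by
    simp only [card_filter]
    exact sum_comm
  refine (Nat.lt_of_mul_lt_mul_right (a := #S) ?_).le
  calc #B * #S = ∑ _i ∈ B, #S := by rw [sum_const, smul_eq_mul]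
    _ < ∑ i ∈ B, k * #{a ∈ S | P i a} := sum_lt_sum_of_nonempty hB fun i hi => (mem_filter.1 hi).2
    _ ≤ ∑ i, k * #{a ∈ S | P i a} := sum_le_sum_of_subset (subset_univ _)
    _ = k * ∑ a ∈ S, #{i | P i a} := by rw [← mul_sum, hdouble]
    _ ≤ k * ∑ _a ∈ S, c := by gcongr with a ha; exact hc a ha
    _ = k * c * #S := by rw [sum_const, smul_eq_mul]; ring

section Stability

variable {G : Type*} [AddCommGroup G]

theorem eq_zsmul_of_add_one_of_abs_le {m : ℤ → G} {X : ℤ} (h0 : m 0 = 0)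
    (hstep : ∀ t, |t| ≤ X → |t + 1| ≤ X → m (t + 1) = m t + m 1) {x : ℤ} (hx : |x| ≤ X) :
    m x = x • m 1 := by
  induction x using Int.induction_on with
  | zero => rw [h0, zero_smul]
  | succ i ih =>
    have hi : |(i : ℤ)| ≤ X := by rw [abs_le] at hx ⊢; omega
    rw [hstep i hi hx, ih hi, add_smul, one_smul]
  | pred i ih =>
    have hi : |-(i : ℤ)| ≤ X := by rw [abs_le] at hx ⊢; omega
    have h := hstep (-i - 1) hx (by rwa [sub_add_cancel])
    rw [sub_add_cancel, ih hi] at h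
    rw [sub_smul, one_smul, h, add_sub_cancel_right]

variable [DecidableEq G]

def defectPairs (g : ℤ → G) (J : Finset ℤ) : Finset (ℤ × ℤ) :=
  {p ∈ J ×ˢ J | g (p.1 + p.2) ≠ g p.1 + g p.2}

def defectsAt (g : ℤ → G) (I : Finset ℤ) (t : ℤ) : Finset ℤ :=
  {y ∈ I | g (y + t) ≠ g y + g t}

def diffMisses (g : ℤ → G) (I : Finset ℤ) (t : ℤ) (v : G) : Finset ℤ :=
  {y ∈ I | g (y + t) - g y ≠ v}

variable (g : ℤ → G) {I J : Finset ℤ} {X : ℤ}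

theorem card_shifted_diff_ne_le (hIJ : ∀ t, |t| ≤ 2 * X → ∀ y ∈ I, y + t ∈ J) {s t : ℤ}
    (hs : |s| ≤ X) (ht : |t| ≤ X) :
    #{p ∈ I ×ˢ I | g (p.1 + t + s) - g (p.1 + t) ≠ g (p.2 + s) - g p.2}
      ≤ 2 * #(defectPairs g J) := by
  set C := {p ∈ I ×ˢ I | g (p.1 + t + s) - g (p.1 + t) ≠ g (p.2 + s) - g p.2}
  set D := defectPairs g J
  let e₁ : ℤ × ℤ → ℤ × ℤ := fun p => (p.1 + t, p.2 + s)
  let e₂ : ℤ × ℤ → ℤ × ℤ := fun p => (p.2, p.1 + t + s)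
  have he₁ : e₁.Injective := fun p q h => by
    simp only [e₁, Prod.mk.injEq] at h; exact Prod.ext (by omega) (by omega)
  have he₂ : e₂.Injective := fun p q h => by
    simp only [e₂, Prod.mk.injEq] at h; exact Prod.ext (by omega) (by omega)
  -- additivity at both `e₁ p` and `e₂ p` would split `g (y + t + z + s)` in two ways that
  -- force the two differences to agree
  have hcover : ∀ p ∈ C, e₁ p ∈ D ∨ e₂ p ∈ D := by
    rintro ⟨y, z⟩ hp
    simp only [C, mem_filter, mem_product] at hp
    obtain ⟨⟨hy, hz⟩, hne⟩ := hp
    have hs' : |s| ≤ 2 * X := by rw [abs_le] at hs ⊢; omega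
    have ht' : |t| ≤ 2 * X := by rw [abs_le] at ht ⊢; omega
    have hts : |t + s| ≤ 2 * X := by rw [abs_le] at hs ht ⊢; omega
    have hz0 : z ∈ J := by simpa using hIJ 0 (by simpa using (abs_nonneg s).trans hs') z hz
    have hyts : y + t + s ∈ J := by rw [add_assoc]; exact hIJ _ hts y hy
    by_contra! h
    simp only [D, defectPairs, e₁, e₂, mem_filter, mem_product, not_and, not_not] at h
    have h₁ := h.1 ⟨hIJ t ht' y hy, hIJ s hs' z hz⟩
    have h₂ := h.2 ⟨hz0, hyts⟩
    rw [show z + (y + t + s) = y + t + (z + s) by ring, h₁] at h₂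
    exact hne (by rw [sub_eq_sub_iff_add_eq_add, add_comm _ (g (y + t)), h₂, add_comm])
  calc #C ≤ #({p ∈ C | e₁ p ∈ D} ∪ {p ∈ C | e₂ p ∈ D}) :=
        card_le_card fun p hp => by
          simpa only [mem_union, mem_filter, hp, true_and] using hcover p hp
    _ ≤ #{p ∈ C | e₁ p ∈ D} + #{p ∈ C | e₂ p ∈ D} := card_union_le _ _
    _ ≤ #D + #D := add_le_add
        (card_le_card_of_injOn e₁ (fun p hp => (mem_filter.1 hp).2) he₁.injOn)
        (card_le_card_of_injOn e₂ (fun p hp => (mem_filter.1 hp).2) he₂.injOn)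
    _ = 2 * #D := (two_mul _).symm

theorem exists_diffMisses_le (hIJ : ∀ t, |t| ≤ 2 * X → ∀ y ∈ I, y + t ∈ J)
    (hE : 14 * #(defectPairs g J) ≤ #I * #I) (hI : I.Nonempty) {t : ℤ} (ht : |t| ≤ X) :
    ∃ v, 7 * #(diffMisses g I t v) ≤ #I := by
  obtain ⟨v, hv⟩ := exists_mul_card_filter_ne_le I fun y => g (y + t) - g y
  have hcross := card_shifted_diff_ne_le g hIJ ht (t := 0) (by simpa using (abs_nonneg t).trans ht)
  simp only [add_zero] at hcross
  refine ⟨v, Nat.le_of_mul_le_mul_left ?_ hI.card_pos⟩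
  calc #I * (7 * #(diffMisses g I t v)) = 7 * (#I * #(diffMisses g I t v)) := by ring
    _ ≤ #I * #I := by unfold diffMisses; omega

theorem add_eq_of_diffMisses_le (hIJ : ∀ t, |t| ≤ 2 * X → ∀ y ∈ I, y + t ∈ J)
    (hE : 14 * #(defectPairs g J) ≤ #I * #I) (hI : I.Nonempty) {s t : ℤ} {u v w : G}
    (hs : |s| ≤ X) (ht : |t| ≤ X)
    (hu : 7 * #(diffMisses g I s u) ≤ #I) (hv : 7 * #(diffMisses g I t v) ≤ #I)
    (hw : 7 * #(diffMisses g I (s + t) w) ≤ #I) : w = u + v := by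
  set A := {y ∈ I | g (y + t + s) - g (y + t) ≠ u}
  set H := {z ∈ I | g (z + s) - g z = u}
  have hH : #H + #(diffMisses g I s u) = #I := card_filter_add_card_filter_not _
  have hAH : #A * #H ≤ 2 * #(defectPairs g J) := by
    refine (card_product A H).symm.trans_le
      ((card_le_card ?_).trans (card_shifted_diff_ne_le g hIJ hs ht))
    rintro ⟨y, z⟩ hp
    simp only [A, H, mem_product, mem_filter] at hp ⊢
    exact ⟨⟨hp.1.1, hp.2.1⟩, hp.2.2 ▸ hp.1.2⟩
  have hA : 6 * #A ≤ #I := by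
    refine Nat.le_of_mul_le_mul_left ?_ hI.card_pos
    nlinarith
  -- the three sets have densities at most 1/7, 1/7 and 1/6 in `I`
  obtain ⟨y, hy, hy'⟩ := exists_mem_notMem_of_card_lt_card
    (s := diffMisses g I (s + t) w ∪ diffMisses g I t v ∪ A) (t := I) <| by
      have := card_union_le (diffMisses g I (s + t) w ∪ diffMisses g I t v) A
      have := card_union_le (diffMisses g I (s + t) w) (diffMisses g I t v)
      have := hI.card_pos
      omega
  simp only [diffMisses, A, mem_union, mem_filter, hy, true_and, not_or, not_not] at hy'
  obtain ⟨⟨hyw, hyv⟩, hyu⟩ := hy'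
  rw [← hyw, ← hyv, ← hyu, show y + (s + t) = y + t + s by ring]
  abel

theorem eq_of_diffMisses_le (hI : I.Nonempty) {t : ℤ} {v : G}
    (hv : 7 * #(diffMisses g I t v) ≤ #I) (ht : 2 * #(defectsAt g I t) ≤ #I) : v = g t := by
  obtain ⟨y, hy, hy'⟩ := exists_mem_notMem_of_card_lt_card
    (s := diffMisses g I t v ∪ defectsAt g I t) (t := I) <| by
      have := card_union_le (diffMisses g I t v) (defectsAt g I t)
      have := hI.card_pos
      omega
  simp only [diffMisses, defectsAt, mem_union, mem_filter, hy, true_and, not_or, not_not] at hy'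
  rw [← hy'.1, hy'.2, add_sub_cancel_left]

theorem eq_zsmul_of_few_defects (hIJ : ∀ t, |t| ≤ 2 * X → ∀ y ∈ I, y + t ∈ J)
    (hE : 14 * #(defectPairs g J) ≤ #I * #I) (hI : I.Nonempty) (hX : 1 ≤ X) {x : ℤ}
    (hx : |x| ≤ X) (h1 : 2 * #(defectsAt g I 1) ≤ #I) (hx1 : 2 * #(defectsAt g I x) ≤ #I) :
    g x = x • g 1 := by
  choose! m hm using fun t (ht : |t| ≤ X) => exists_diffMisses_le g hIJ hE hI ht
  have hadd : ∀ s t, |s| ≤ X → |t| ≤ X → |s + t| ≤ X → m (s + t) = m s + m t :=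
    fun s t hs ht hst => add_eq_of_diffMisses_le g hIJ hE hI hs ht (hm s hs) (hm t ht) (hm _ hst)
  have h0X : |(0 : ℤ)| ≤ X := by rw [abs_zero]; omega
  have h1X : |(1 : ℤ)| ≤ X := by rwa [abs_one]
  have hm0 : m 0 = 0 := by simpa using hadd 0 0 h0X h0X (by simpa using h0X)
  have hlin := eq_zsmul_of_add_one_of_abs_le hm0 (fun t ht ht1 => hadd t 1 ht h1X ht1) hx
  rw [← eq_of_diffMisses_le g hI (hm x hx) hx1, ← eq_of_diffMisses_le g hI (hm 1 h1X) h1, hlin]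

end Stability

theorem wH_eq_card_filter {Q : Type*} [Zero Q] [DecidableEq Q] {n : ℕ} (v : Fin n → Q) :
    wH v = #{i | v i ≠ 0} := by
  rw [wH, Nat.card_eq_fintype_card, Fintype.card_subtype]

noncomputable def block (X : ℤ) : Finset ℤ := Ico (1000 * X) (2000 * X)

noncomputable def paddedBlock (X : ℤ) : Finset ℤ := Ico (998 * X) (2002 * X)

theorem add_mem_paddedBlock {X t : ℤ} (ht : |t| ≤ 2 * X) {y : ℤ} (hy : y ∈ block X) :
    y + t ∈ paddedBlock X := by
  rw [block, mem_Ico] at hy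
  rw [paddedBlock, mem_Ico]
  rw [abs_le] at ht
  omega

theorem eq_zsmul_of_sparse_defects {G : Type*} [AddCommGroup G] [DecidableEq G] (g : ℤ → G)
    {X x : ℤ} (hX : 1 ≤ X) (hx : |x| ≤ X)
    (hJ : 16 * #(defectPairs g (paddedBlock X)) ≤ #(paddedBlock X ×ˢ paddedBlock X))
    (h1 : 2 * #(defectsAt g (block X) 1) ≤ #(block X))
    (hx1 : 2 * #(defectsAt g (block X) x) ≤ #(block X)) :
    g x = x • g 1 := by
  have hIcard : (#(block X) : ℤ) = 1000 * X := by
    rw [block, Int.card_Ico, Int.toNat_of_nonneg (by omega)]; ring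
  have hJcard : (#(paddedBlock X) : ℤ) = 1004 * X := by
    rw [paddedBlock, Int.card_Ico, Int.toNat_of_nonneg (by omega)]; ring
  have hE : 14 * #(defectPairs g (paddedBlock X)) ≤ #(block X) * #(block X) := by
    rw [card_product] at hJ
    zify at hJ ⊢
    rw [hJcard] at hJ
    rw [hIcard]
    nlinarith
  refine eq_zsmul_of_few_defects g (fun t ht y hy => add_mem_paddedBlock ht hy) hE ?_ hX hx h1 hx1
  rw [← card_pos]
  omega

theorem card_defect_coords_le {G : Type*} [AddCommGroup G] [DecidableEq G] {c n : ℕ}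
    {f : ℤ → Fin n → G} (hf : ∀ x y : ℤ, wH (f (x + y) - f x - f y) ≤ c) (a b : ℤ) :
    #{i | f (a + b) i ≠ f a i + f b i} ≤ c := by
  simpa only [wH_eq_card_filter, Pi.sub_apply, Pi.add_apply, sub_sub, sub_ne_zero] using hf a b

theorem main_theorem (c : ℕ) {n : ℕ} (f : ℤ → Fin n → ℚ)
    (hf : ∀ x y : ℤ, wH (f (x + y) - f x - f y) ≤ c) :
    ∀ x : ℤ, wH (f x - x • f 1) ≤ 28 * c := by
  intro x
  set X := |x| + 1
  set I := block X
  set J := paddedBlock X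
  set BA : Finset (Fin n) := {i | #(J ×ˢ J) < 16 * #(defectPairs (f · i) J)}
  set B1 : Finset (Fin n) := {i | #I < 2 * #(defectsAt (f · i) I 1)}
  set Bx : Finset (Fin n) := {i | #I < 2 * #(defectsAt (f · i) I x)}
  have hBA : #BA ≤ 16 * c :=
    card_filter_lt_mul_card_filter_le _ _ (fun p _ => card_defect_coords_le hf p.1 p.2) 16
  have hB1 : #B1 ≤ 2 * c :=
    card_filter_lt_mul_card_filter_le _ _ (fun y _ => card_defect_coords_le hf y 1) 2
  have hBx : #Bx ≤ 2 * c :=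
    card_filter_lt_mul_card_filter_le _ _ (fun y _ => card_defect_coords_le hf y x) 2
  have hsupp : ({i | (f x - x • f 1) i ≠ 0} : Finset (Fin n)) ⊆ BA ∪ B1 ∪ Bx := by
    intro i hi
    contrapose! hi
    simp only [BA, B1, Bx, mem_union, mem_filter, mem_univ, true_and, not_or, not_lt] at hi
    have hX : 1 ≤ X := le_add_of_nonneg_left (abs_nonneg x)
    have hx : |x| ≤ X := le_add_of_nonneg_right zero_le_one
    simp [eq_zsmul_of_sparse_defects (f · i) hX hx hi.1.1 hi.1.2 hi.2]
  calc wH (f x - x • f 1) = #{i | (f x - x • f 1) i ≠ 0} := wH_eq_card_filter _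
    _ ≤ #(BA ∪ B1 ∪ Bx) := card_le_card hsupp
    _ ≤ #BA + #B1 + #Bx := (card_union_le _ _).trans (Nat.add_le_add_right (card_union_le _ _) _)
    _ ≤ 28 * c := by omega
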